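/- arXiv:2406.06325 — 4 statements merged into one kernel-verified Lean document; each statement's English description precedes it below -/
import Mathlib

section
/- (Konno–Kuroda resolvent identity, part 1) Let H₀ be self-adjoint on a Hilbert space ℋ, A : ℋ → 𝒦 bounded, g ∈ ℝ \ {0}, and H_g = H₀ − g A*A (self-adjoint on D(H₀)). For every z ∈ ρ(H₀) ∩ ρ(H_g), the operator 1_𝒦 − φ(z) with φ(z) = g A R_{H₀}(z) A* is invertible in ℬ(𝒦) with inverse 1_𝒦 + M(z), where M(z) = g A R_{H_g}(z) A*. -/
/-!
Writing `L₀ = H₀ - z` and `V = g A*A`, so that `H_g - z = L₀ - V`, the two-sided inverses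
`R₀`, `R_g` satisfy the second resolvent identities `R_g = R₀ + R₀ V R_g = R₀ + R_g V R₀`.
Sandwiching them between `A` and `A*` gives `A R_g A* - A R₀ A* = g (A R₀ A*)(A R_g A*)
= g (A R_g A*)(A R₀ A*)`, which is exactly `(1 - φ)(1 + M) = 1 = (1 + M)(1 - φ)`.
-/

section ResolventIdentity

variable {R M : Type*} [CommRing R] [AddCommGroup M] [Module R M]
  {F : Type*} [FunLike F M M] [AddMonoidHomClass F M M]

theorem apply_eq_add_of_leftInverse_of_rightInverse_sub {L V : M →ₗ[R] M} {R₁ R₂ : F}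
    (h₁ : ∀ x, R₁ (L x) = x) (h₂ : ∀ x, (L - V) (R₂ x) = x) (x : M) :
    R₂ x = R₁ x + R₁ (V (R₂ x)) := by
  calc R₂ x = R₁ ((L - V) (R₂ x) + V (R₂ x)) := by simp [h₁]
    _ = R₁ x + R₁ (V (R₂ x)) := by rw [h₂, map_add]

theorem apply_eq_add_of_rightInverse_of_leftInverse_sub {L V : M →ₗ[R] M} {R₁ R₂ : F}
    (h₁ : ∀ x, L (R₁ x) = x) (h₂ : ∀ x, R₂ ((L - V) x) = x) (x : M) :
    R₂ x = R₁ x + R₂ (V (R₁ x)) := by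
  calc R₂ x = R₂ ((L - V) (R₁ x) + V (R₁ x)) := by simp [h₁]
    _ = R₁ x + R₂ (V (R₁ x)) := by rw [map_add, h₂]

end ResolventIdentity

section BirmanSchwinger

variable {R E G : Type*} [CommRing R] [TopologicalSpace E] [AddCommGroup E] [Module R E]
  [TopologicalSpace G] [AddCommGroup G] [Module R G] [IsTopologicalAddGroup G]
  [ContinuousConstSMul R G]
  (A : E →L[R] G) (B : G →L[R] E) {R₀ R₁ : E →L[R] E} (c : R)

theorem one_sub_smul_comp_mul_one_add_smul_comp_eq_one
    (h : ∀ x, R₁ x = R₀ x + c • R₀ (B (A (R₁ x)))) :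
    (1 - c • (A ∘L R₀ ∘L B)) * (1 + c • (A ∘L R₁ ∘L B)) = 1 := by
  ext v
  have hA := congrArg A (h (B v))
  simp only [map_add, map_smul] at hA
  simp only [mul_apply_eq_comp, sub_apply, add_apply, one_apply_eq_self, smul_apply,
    ContinuousLinearMap.comp_apply, map_add, map_smul]
  linear_combination (norm := module) c • hA

theorem one_add_smul_comp_mul_one_sub_smul_comp_eq_one
    (h : ∀ x, R₁ x = R₀ x + c • R₁ (B (A (R₀ x)))) :
    (1 + c • (A ∘L R₁ ∘L B)) * (1 - c • (A ∘L R₀ ∘L B)) = 1 := by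
  ext v
  have hA := congrArg A (h (B v))
  simp only [map_add, map_smul] at hA
  simp only [mul_apply_eq_comp, sub_apply, add_apply, one_apply_eq_self, smul_apply,
    ContinuousLinearMap.comp_apply, map_sub, map_smul]
  linear_combination (norm := module) c • hA

end BirmanSchwinger

theorem stmt_2_general {H K : Type*} [NormedAddCommGroup H] [InnerProductSpace ℂ H] [CompleteSpace H]
    [NormedAddCommGroup K] [InnerProductSpace ℂ K] [CompleteSpace K]
    (H0 : H →ₗ[ℂ] H)
    (A : H →L[ℂ] K) (g : ℝ) (z : ℂ)
    (Hg : H →ₗ[ℂ] H)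
    (hHg : ∀ x, Hg x = H0 x - (g : ℂ) • (ContinuousLinearMap.adjoint A (A x)))
    (R0 Rg : H →L[ℂ] H)
    (hR0₁ : ∀ x, H0 (R0 x) - z • (R0 x) = x) (hR0₂ : ∀ x, R0 (H0 x - z • x) = x)
    (hRg₁ : ∀ x, Hg (Rg x) - z • (Rg x) = x) (hRg₂ : ∀ x, Rg (Hg x - z • x) = x) :
    ((1 : K →L[ℂ] K) - (g : ℂ) • (A ∘L R0 ∘L ContinuousLinearMap.adjoint A)) *
        ((1 : K →L[ℂ] K) + (g : ℂ) • (A ∘L Rg ∘L ContinuousLinearMap.adjoint A)) = 1 ∧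
    ((1 : K →L[ℂ] K) + (g : ℂ) • (A ∘L Rg ∘L ContinuousLinearMap.adjoint A)) *
        ((1 : K →L[ℂ] K) - (g : ℂ) • (A ∘L R0 ∘L ContinuousLinearMap.adjoint A)) = 1 := by
  set L₀ : H →ₗ[ℂ] H := H0 - z • LinearMap.id
  set V : H →ₗ[ℂ] H := (g : ℂ) • (ContinuousLinearMap.adjoint A ∘L A).toLinearMap
  have hL₀ : ∀ x, L₀ x = H0 x - z • x := fun _ => rfl
  have hLg : ∀ x, (L₀ - V) x = Hg x - z • x := fun x => by
    simp only [LinearMap.sub_apply, hL₀, V, hHg, LinearMap.smul_apply,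
      ContinuousLinearMap.coe_coe, ContinuousLinearMap.comp_apply]
    abel
  have hV : ∀ x, V x = (g : ℂ) • ContinuousLinearMap.adjoint A (A x) := fun _ => rfl
  refine ⟨one_sub_smul_comp_mul_one_add_smul_comp_eq_one _ _ _ fun x => ?_,
    one_add_smul_comp_mul_one_sub_smul_comp_eq_one _ _ _ fun x => ?_⟩
  · simpa only [hV, map_smul] using
      apply_eq_add_of_leftInverse_of_rightInverse_sub (L := L₀) (V := V) (R₁ := R0)
        (by simpa only [hL₀] using hR0₂) (by simpa only [hLg] using hRg₁) x
  · simpa only [hV, map_smul] using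
      apply_eq_add_of_rightInverse_of_leftInverse_sub (L := L₀) (V := V) (R₂ := Rg)
        (by simpa only [hL₀] using hR0₁) (by simpa only [hLg] using hRg₂) x

/-- Konno–Kuroda resolvent identity, part 1: with `H_g = H₀ − g A*A`, for
`z ∈ ρ(H₀) ∩ ρ(H_g)` the operator `1 − φ(z)`, `φ(z) = g A R_{H₀}(z) A*`, is invertible
with inverse `1 + M(z)`, `M(z) = g A R_{H_g}(z) A*`. -/
theorem stmt_2 {H K : Type*} [NormedAddCommGroup H] [InnerProductSpace ℂ H] [CompleteSpace H]
    [NormedAddCommGroup K] [InnerProductSpace ℂ K] [CompleteSpace K]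
    (H0 : H →ₗ[ℂ] H) (hsym : ∀ x y : H, (inner ℂ (H0 x) y : ℂ) = inner ℂ x (H0 y))
    (A : H →L[ℂ] K) (g : ℝ) (hg : g ≠ 0) (z : ℂ)
    (Hg : H →ₗ[ℂ] H)
    (hHg : ∀ x, Hg x = H0 x - (g : ℂ) • (ContinuousLinearMap.adjoint A (A x)))
    (R0 Rg : H →L[ℂ] H)
    (hR0₁ : ∀ x, H0 (R0 x) - z • (R0 x) = x) (hR0₂ : ∀ x, R0 (H0 x - z • x) = x)
    (hRg₁ : ∀ x, Hg (Rg x) - z • (Rg x) = x) (hRg₂ : ∀ x, Rg (Hg x - z • x) = x) :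
    ((1 : K →L[ℂ] K) - (g : ℂ) • (A ∘L R0 ∘L ContinuousLinearMap.adjoint A)) *
        ((1 : K →L[ℂ] K) + (g : ℂ) • (A ∘L Rg ∘L ContinuousLinearMap.adjoint A)) = 1 ∧
    ((1 : K →L[ℂ] K) + (g : ℂ) • (A ∘L Rg ∘L ContinuousLinearMap.adjoint A)) *
        ((1 : K →L[ℂ] K) - (g : ℂ) • (A ∘L R0 ∘L ContinuousLinearMap.adjoint A)) = 1 :=
  stmt_2_general H0 A g z Hg hHg R0 Rg hR0₁ hR0₂ hRg₁ hRg₂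
end

section
/- (Konno–Kuroda resolvent identity, part 2) With the notation above, for every z ∈ ρ(H₀) ∩ ρ(H_g) one has R_{H_g}(z) = R_{H₀}(z) + g R_{H₀}(z) A* [1_𝒦 − g A R_{H₀}(z) A*]^{-1} A R_{H₀}(z). -/
/- A right inverse of `H₀ - z` and one of `1 - g A R₀(z) A*` assemble into a right inverse of
`H_g - z = (H₀ - z) - g A* A` (a Woodbury-type identity, pure algebra); since `R_{H_g}(z)` is
also a left inverse of `H_g - z`, it must equal that right inverse. -/

theorem LinearMap.woodbury_rightInverse {𝕜 E F : Type*} [CommRing 𝕜]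
    [AddCommGroup E] [Module 𝕜 E] [AddCommGroup F] [Module 𝕜 F]
    (L R : E →ₗ[𝕜] E) (C : E →ₗ[𝕜] F) (D : F →ₗ[𝕜] E) (B : F →ₗ[𝕜] F) (c : 𝕜)
    (hR : Function.RightInverse R L) (hB : ∀ y, B y - c • C (R (D (B y))) = y) :
    Function.RightInverse (fun x ↦ R x + c • R (D (B (C (R x))))) ⇑(L - c • D ∘ₗ C) := by
  intro x
  dsimp only
  have hDB : D (B (C (R x))) - c • D (C (R (D (B (C (R x)))))) = D (C (R x)) := by
    rw [← map_smul, ← map_sub, hB]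
  simp only [LinearMap.sub_apply, LinearMap.smul_apply, LinearMap.comp_apply, map_add, map_smul,
    hR.eq]
  linear_combination (norm := module) c • hDB

theorem stmt_3_general {H K : Type*} [NormedAddCommGroup H] [InnerProductSpace ℂ H] [CompleteSpace H]
    [NormedAddCommGroup K] [InnerProductSpace ℂ K] [CompleteSpace K]
    (H0 : H →ₗ[ℂ] H)
    (A : H →L[ℂ] K) (g : ℝ) (z : ℂ)
    (Hg : H →ₗ[ℂ] H)
    (hHg : ∀ x, Hg x = H0 x - (g : ℂ) • (ContinuousLinearMap.adjoint A (A x)))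
    (R0 Rg : H →L[ℂ] H)
    (hR0₁ : ∀ x, H0 (R0 x) - z • (R0 x) = x)
    (hRg₂ : ∀ x, Rg (Hg x - z • x) = x)
    (B : K →L[ℂ] K)
    (hB₁ : ((1 : K →L[ℂ] K) - (g : ℂ) • (A ∘L R0 ∘L ContinuousLinearMap.adjoint A)) * B = 1) :
    ∀ x, Rg x = R0 x + (g : ℂ) • R0 (ContinuousLinearMap.adjoint A (B (A (R0 x)))) := by
  intro x
  set S := R0 x + (g : ℂ) • R0 (ContinuousLinearMap.adjoint A (B (A (R0 x))))
  have hB : ∀ y, B y - (g : ℂ) • A (R0 (ContinuousLinearMap.adjoint A (B y))) = y := fun y ↦ by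
    simpa using congrArg (· y) hB₁
  have hHg_sub : Hg - z • LinearMap.id = (H0 - z • LinearMap.id) -
      (g : ℂ) • (ContinuousLinearMap.adjoint A).toLinearMap ∘ₗ A.toLinearMap := by
    ext y
    simp [hHg, sub_right_comm]
  have hS : Hg S - z • S = x := by
    have h := LinearMap.woodbury_rightInverse (H0 - z • LinearMap.id) R0.toLinearMap
      A.toLinearMap (ContinuousLinearMap.adjoint A).toLinearMap B.toLinearMap g
      (fun y ↦ by simpa using hR0₁ y) hB x
    rw [← hHg_sub] at h
    simpa only [LinearMap.sub_apply, LinearMap.smul_apply, LinearMap.id_apply,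
      ContinuousLinearMap.coe_coe] using h
  calc Rg x = Rg (Hg S - z • S) := by rw [hS]
    _ = S := hRg₂ S

/-- Konno–Kuroda resolvent identity, part 2:
`R_{H_g}(z) = R_{H₀}(z) + g R_{H₀}(z) A* [1 − g A R_{H₀}(z) A*]⁻¹ A R_{H₀}(z)`. -/
theorem stmt_3 {H K : Type*} [NormedAddCommGroup H] [InnerProductSpace ℂ H] [CompleteSpace H]
    [NormedAddCommGroup K] [InnerProductSpace ℂ K] [CompleteSpace K]
    (H0 : H →ₗ[ℂ] H) (hsym : ∀ x y : H, (inner ℂ (H0 x) y : ℂ) = inner ℂ x (H0 y))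
    (A : H →L[ℂ] K) (g : ℝ) (hg : g ≠ 0) (z : ℂ)
    (Hg : H →ₗ[ℂ] H)
    (hHg : ∀ x, Hg x = H0 x - (g : ℂ) • (ContinuousLinearMap.adjoint A (A x)))
    (R0 Rg : H →L[ℂ] H)
    (hR0₁ : ∀ x, H0 (R0 x) - z • (R0 x) = x) (hR0₂ : ∀ x, R0 (H0 x - z • x) = x)
    (hRg₁ : ∀ x, Hg (Rg x) - z • (Rg x) = x) (hRg₂ : ∀ x, Rg (Hg x - z • x) = x)
    (B : K →L[ℂ] K)
    (hB₁ : ((1 : K →L[ℂ] K) - (g : ℂ) • (A ∘L R0 ∘L ContinuousLinearMap.adjoint A)) * B = 1)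
    (hB₂ : B * ((1 : K →L[ℂ] K) - (g : ℂ) • (A ∘L R0 ∘L ContinuousLinearMap.adjoint A)) = 1) :
    ∀ x, Rg x = R0 x + (g : ℂ) • R0 (ContinuousLinearMap.adjoint A (B (A (R0 x)))) :=
  stmt_3_general H0 A g z Hg hHg R0 Rg hR0₁ hRg₂ B hB₁
end

section
/- (Konno–Kuroda formula with several channels) Let H₀ be self-adjoint on ℋ, A_i : ℋ → 𝒦_i bounded for i = 1,…,n, g ∈ ℝ \ {0}, and H_g = H₀ − g Σ_{i=1}^n A_i* A_i. For all z ∈ ρ(H₀) ∩ ρ(H_g), R_{H_g}(z) = R_{H₀}(z) + g Σ_{i,j=1}^n R_{H₀}(z) A_i* [Λ(z)^{-1}]_{ij} A_j R_{H₀}(z), where Λ(z)_{ij} = δ_{ij} − g A_i R_{H₀}(z) A_j* : 𝒦_j → 𝒦_i. -/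
/-! With `𝒜 ψ = (Aᵢ ψ)ᵢ` and `𝒞 u = ∑ᵢ Aᵢ* uᵢ`, the right-hand side is `Y = R₀ + g R₀ 𝒞 B 𝒜 R₀`,
where `B` is the block operator `(Bᵢⱼ)` on `⊕ᵢ 𝒦`. Writing `ΛB = 1` as `g 𝒜 R₀ 𝒞 B = B − 1` gives
`(H_g − z) Y = 1 + g 𝒞 B 𝒜 R₀ − g 𝒞 𝒜 R₀ − g 𝒞 (B − 1) 𝒜 R₀ = 1`,
so `R_g = R_g (H_g − z) Y = Y`. -/

section SingleChannel

variable {R E F : Type*} [CommRing R] [AddCommGroup E] [Module R E] [AddCommGroup F] [Module R F]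

theorem konno_kuroda
    (T₀ R₀ Rg : E →ₗ[R] E) (A : E →ₗ[R] F) (C : F →ₗ[R] E) (B : F →ₗ[R] F) (g : R)
    (hR₀ : T₀ ∘ₗ R₀ = LinearMap.id)
    (hB : (LinearMap.id - g • A ∘ₗ R₀ ∘ₗ C) ∘ₗ B = LinearMap.id)
    (hRg : Rg ∘ₗ (T₀ - g • C ∘ₗ A) = LinearMap.id) :
    Rg = R₀ + g • R₀ ∘ₗ C ∘ₗ B ∘ₗ A ∘ₗ R₀ := by
  have hT₀ (y : E) : T₀ (R₀ y) = y := LinearMap.congr_fun hR₀ y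
  have hY : (T₀ - g • C ∘ₗ A) ∘ₗ (R₀ + g • R₀ ∘ₗ C ∘ₗ B ∘ₗ A ∘ₗ R₀) = LinearMap.id := by
    ext x
    have hu : A (R₀ x) = B (A (R₀ x)) - g • A (R₀ (C (B (A (R₀ x))))) := by
      simpa using (LinearMap.congr_fun hB (A (R₀ x))).symm
    simp only [LinearMap.comp_apply, LinearMap.sub_apply, LinearMap.add_apply,
      LinearMap.smul_apply, LinearMap.id_apply, map_add, map_smul, hT₀]
    rw [congrArg C hu, map_sub, map_smul]
    module
  calc Rg = Rg ∘ₗ (T₀ - g • C ∘ₗ A) ∘ₗ (R₀ + g • R₀ ∘ₗ C ∘ₗ B ∘ₗ A ∘ₗ R₀) := by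
        rw [hY, LinearMap.comp_id]
    _ = R₀ + g • R₀ ∘ₗ C ∘ₗ B ∘ₗ A ∘ₗ R₀ := by rw [← LinearMap.comp_assoc, hRg, LinearMap.id_comp]

end SingleChannel

section SeveralChannels

variable {R E F ι : Type*} [CommRing R] [AddCommGroup E] [Module R E] [AddCommGroup F] [Module R F]
  [Fintype ι] [DecidableEq ι]

theorem endVecRingEquivMatrixEnd_symm_apply (m : Matrix ι ι (Module.End R F)) (u : ι → F)
    (i : ι) : (endVecRingEquivMatrixEnd ι R F).symm m u i = ∑ j, m i j (u j) := rfl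

theorem endVecRingEquivMatrixEnd_symm_one_sub_smul (A : ι → E →ₗ[R] F) (C : ι → F →ₗ[R] E)
    (T : E →ₗ[R] E) (g : R) :
    (endVecRingEquivMatrixEnd ι R F).symm (1 - g • Matrix.of fun i j => A i ∘ₗ T ∘ₗ C j) =
      LinearMap.id - g • LinearMap.pi A ∘ₗ T ∘ₗ LinearMap.lsum R (fun _ => F) R C := by
  refine LinearMap.ext fun u => funext fun i => ?_
  rw [endVecRingEquivMatrixEnd_symm_apply]
  simp [Matrix.one_apply, apply_ite (DFunLike.coe : Module.End R F → F → F), ite_apply,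
    Finset.sum_sub_distrib, Finset.smul_sum]

theorem konno_kuroda_of_matrix
    (T₀ R₀ Rg : E →ₗ[R] E) (A : ι → E →ₗ[R] F) (C : ι → F →ₗ[R] E)
    (B : Matrix ι ι (Module.End R F)) (g : R)
    (hR₀ : T₀ ∘ₗ R₀ = LinearMap.id)
    (hB : (1 - g • Matrix.of fun i j => A i ∘ₗ R₀ ∘ₗ C j) * B = 1)
    (hRg : Rg ∘ₗ (T₀ - g • ∑ i, C i ∘ₗ A i) = LinearMap.id) :
    Rg = R₀ + g • ∑ i, ∑ j, R₀ ∘ₗ C i ∘ₗ B i j ∘ₗ A j ∘ₗ R₀ := by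
  set e := (endVecRingEquivMatrixEnd ι R F).symm
  have hCA : LinearMap.lsum R (fun _ => F) R C ∘ₗ LinearMap.pi A = ∑ i, C i ∘ₗ A i := by
    ext x
    simp
  have hB' : (LinearMap.id - g • LinearMap.pi A ∘ₗ R₀ ∘ₗ LinearMap.lsum R (fun _ => F) R C) ∘ₗ
      e B = LinearMap.id := by
    rw [← endVecRingEquivMatrixEnd_symm_one_sub_smul, ← Module.End.mul_eq_comp, ← map_mul, hB,
      map_one]
    rfl
  rw [konno_kuroda T₀ R₀ Rg _ _ _ g hR₀ hB' (by rwa [hCA])]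
  ext x
  simp [e, endVecRingEquivMatrixEnd_symm_apply, Finset.smul_sum, -endVecRingEquivMatrixEnd]

end SeveralChannels

theorem stmt_4_general {H K : Type*} [NormedAddCommGroup H] [InnerProductSpace ℂ H] [CompleteSpace H]
    [NormedAddCommGroup K] [InnerProductSpace ℂ K] [CompleteSpace K]
    {n : ℕ}
    (H0 : H →ₗ[ℂ] H)
    (A : Fin n → (H →L[ℂ] K)) (g : ℝ) (z : ℂ)
    (Hg : H →ₗ[ℂ] H)
    (hHg : ∀ x, Hg x = H0 x - (g : ℂ) • ∑ i, ContinuousLinearMap.adjoint (A i) ((A i) x))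
    (R0 Rg : H →L[ℂ] H)
    (hR0₁ : ∀ x, H0 (R0 x) - z • (R0 x) = x)
    (hRg₂ : ∀ x, Rg (Hg x - z • x) = x)
    (Λ B : Fin n → Fin n → (K →L[ℂ] K))
    (hΛ : ∀ i j, Λ i j = (if i = j then (1 : K →L[ℂ] K) else 0)
      - (g : ℂ) • ((A i) ∘L R0 ∘L ContinuousLinearMap.adjoint (A j)))
    (hB₁ : ∀ i j, ∑ k, (Λ i k) ∘L (B k j) = if i = j then (1 : K →L[ℂ] K) else 0) :
    ∀ x, Rg x = R0 x +
      (g : ℂ) • ∑ i, ∑ j, R0 (ContinuousLinearMap.adjoint (A i) ((B i j) ((A j) (R0 x)))) := by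
  have hB : (1 - (g : ℂ) • Matrix.of fun i j => (A i : H →ₗ[ℂ] K) ∘ₗ (R0 : H →ₗ[ℂ] H) ∘ₗ
      (ContinuousLinearMap.adjoint (A j) : K →ₗ[ℂ] H)) *
        Matrix.of (fun i j => (B i j : Module.End ℂ K)) = 1 := by
    ext i j u
    have := DFunLike.congr_fun (hB₁ i j) u
    simp only [hΛ] at this
    simpa [Matrix.mul_apply, Matrix.one_apply, ite_apply,
      apply_ite (DFunLike.coe : (K →L[ℂ] K) → K → K),
      apply_ite (DFunLike.coe : Module.End ℂ K → K → K)] using this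
  have key := konno_kuroda_of_matrix (H0 - z • LinearMap.id) R0 Rg
    (fun i => (A i : H →ₗ[ℂ] K)) (fun i => ContinuousLinearMap.adjoint (A i)) _ (g : ℂ)
    (LinearMap.ext hR0₁) hB (LinearMap.ext fun x => by simpa [hHg, sub_right_comm] using hRg₂ x)
  intro x
  simpa using LinearMap.congr_fun key x

/-- Konno–Kuroda formula with several channels:
`R_{H_g}(z) = R_{H₀}(z) + g Σ_{i,j} R_{H₀}(z) A_i* [Λ(z)⁻¹]_{ij} A_j R_{H₀}(z)`, where
`Λ(z)_{ij} = δ_{ij} − g A_i R_{H₀}(z) A_j*` and `H_g = H₀ − g Σ_i A_i* A_i`. -/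
theorem stmt_4 {H K : Type*} [NormedAddCommGroup H] [InnerProductSpace ℂ H] [CompleteSpace H]
    [NormedAddCommGroup K] [InnerProductSpace ℂ K] [CompleteSpace K]
    {n : ℕ}
    (H0 : H →ₗ[ℂ] H) (hsym : ∀ x y : H, (inner ℂ (H0 x) y : ℂ) = inner ℂ x (H0 y))
    (A : Fin n → (H →L[ℂ] K)) (g : ℝ) (hg : g ≠ 0) (z : ℂ)
    (Hg : H →ₗ[ℂ] H)
    (hHg : ∀ x, Hg x = H0 x - (g : ℂ) • ∑ i, ContinuousLinearMap.adjoint (A i) ((A i) x))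
    (R0 Rg : H →L[ℂ] H)
    (hR0₁ : ∀ x, H0 (R0 x) - z • (R0 x) = x) (hR0₂ : ∀ x, R0 (H0 x - z • x) = x)
    (hRg₁ : ∀ x, Hg (Rg x) - z • (Rg x) = x) (hRg₂ : ∀ x, Rg (Hg x - z • x) = x)
    (Λ B : Fin n → Fin n → (K →L[ℂ] K))
    (hΛ : ∀ i j, Λ i j = (if i = j then (1 : K →L[ℂ] K) else 0)
      - (g : ℂ) • ((A i) ∘L R0 ∘L ContinuousLinearMap.adjoint (A j)))
    (hB₁ : ∀ i j, ∑ k, (Λ i k) ∘L (B k j) = if i = j then (1 : K →L[ℂ] K) else 0)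
    (hB₂ : ∀ i j, ∑ k, (B i k) ∘L (Λ k j) = if i = j then (1 : K →L[ℂ] K) else 0) :
    ∀ x, Rg x = R0 x +
      (g : ℂ) • ∑ i, ∑ j, R0 (ContinuousLinearMap.adjoint (A i) ((B i j) ((A j) (R0 x)))) :=
  stmt_4_general H0 A g z Hg hHg R0 Rg hR0₁ hRg₂ Λ B hΛ hB₁
end

section
/- (Schur bound for the 4-dimensional Green function kernel) Let z < 0. The kernel K(x,y,w; x',y',w') = G_z^{(4)}(x−x', y−x', w−y', w−w'), where G_z^{(4)}(X) = ∫₀^∞ (4πt)^{-2} e^{−|X|²/(4t)+zt} dt is the Green function of the Laplacian on ℝ⁴, satisfies sup ∫_{ℝ³} K dx'dy'dw' ≤ 1/(2√(2|z|)); hence the induced integral operator B : L²(ℝ³) → L²(ℝ³) is bounded with ‖B‖ ≤ (2√(2|z|))^{-1}. -/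
open MeasureTheory

/-- The kernel built from the 4-dimensional Green function `G_z^{(4)}` at energy `z < 0`:
`K(x,y,w;x',y',w') = G_z^{(4)}(x−x', y−x', w−y', w−w')`. -/
noncomputable def K4 (z x y w x' y' w' : ℝ) : ℝ :=
  ∫ t in Set.Ioi (0 : ℝ), (4 * Real.pi * t) ^ (-(2 : ℝ)) *
    Real.exp (-(((x - x') ^ 2 + (y - x') ^ 2 + (w - y') ^ 2 + (w - w') ^ 2) / (4 * t)) + z * t)

/-!
`G_z^{(4)}` is a time integral of heat kernels, so by Tonelli the row (and column) integrals of
the kernel over `ℝ³` are, at each time `t`, products of three one-dimensional Gaussian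
integrals: two of them give `√(4πt)`, and the one in which two squares share a variable gives
at most `√(2πt)` after completing the square. The factor `(4πt)^{-2} · 4πt · √(2πt)` leaves
`√(2π)/(4π) · ∫₀^∞ e^{zt} t^{-1/2} dt = √(2π)/(4π) · √(π/|z|) = 1/(2√(2|z|))`.
Both row and column integrals being bounded by this constant, Schur's test (Cauchy–Schwarz
against the kernel as a weight, then Tonelli) bounds the operator on `L²(ℝ³)`.
-/

open scoped ENNReal

theorem ofReal_integral_le_lintegral_ofReal {α : Type*} [MeasurableSpace α] {μ : Measure α}
    {f : α → ℝ} (hf : 0 ≤ᵐ[μ] f) :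
    ENNReal.ofReal (∫ a, f a ∂μ) ≤ ∫⁻ a, ENNReal.ofReal (f a) ∂μ := by
  rw [← Real.enorm_eq_ofReal (integral_nonneg_of_ae hf)]
  refine (enorm_integral_le_lintegral_enorm f).trans_eq (lintegral_congr_ae ?_)
  filter_upwards [hf] with a ha using Real.enorm_eq_ofReal ha

theorem integral_le_of_lintegral_ofReal_le {α : Type*} [MeasurableSpace α] {μ : Measure α}
    {f : α → ℝ} (hf : ∀ a, 0 ≤ f a) {C : ℝ} (hC : 0 ≤ C)
    (h : ∫⁻ a, ENNReal.ofReal (f a) ∂μ ≤ ENNReal.ofReal C) : ∫ a, f a ∂μ ≤ C := by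
  refine (le_abs_self _).trans <| (norm_integral_le_lintegral_norm f).trans <|
    ENNReal.toReal_le_of_le_ofReal hC ?_
  simpa only [Real.norm_of_nonneg (hf _)] using h

section Schur

variable {α β : Type*} [MeasurableSpace α] [MeasurableSpace β]

theorem eLpNorm_two_sq {E : Type*} [NormedAddCommGroup E] (f : α → E) (μ : Measure α) :
    eLpNorm f 2 μ ^ 2 = ∫⁻ a, ‖f a‖ₑ ^ 2 ∂μ := by
  simpa using eLpNorm_nnreal_pow_eq_lintegral (μ := μ) (f := f) (p := 2) two_ne_zero

theorem lintegral_mul_sq_le {μ : Measure α} {k g : α → ℝ≥0∞}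
    (hk : AEMeasurable k μ) (hg : AEMeasurable g μ) :
    (∫⁻ a, k a * g a ∂μ) ^ 2 ≤ (∫⁻ a, k a ∂μ) * ∫⁻ a, k a * g a ^ 2 ∂μ := by
  have hhalf : ∀ x : ℝ≥0∞, (x ^ (1 / 2 : ℝ)) ^ 2 = x := fun x => by
    rw [← ENNReal.rpow_natCast, ← ENNReal.rpow_mul]; norm_num
  have hsqrt : AEMeasurable (fun a => k a ^ (1 / 2 : ℝ)) μ := hk.pow_const _
  have hH := ENNReal.lintegral_mul_le_Lp_mul_Lq μ Real.HolderConjugate.two_two hsqrt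
    (hsqrt.mul hg)
  simp only [Pi.mul_apply, ← mul_assoc, ENNReal.mul_rpow_of_nonneg _ _ zero_le_two,
    ENNReal.rpow_two, ← sq, hhalf] at hH
  calc (∫⁻ a, k a * g a ∂μ) ^ 2
      ≤ ((∫⁻ a, k a ∂μ) ^ (1 / 2 : ℝ) * (∫⁻ a, k a * g a ^ 2 ∂μ) ^ (1 / 2 : ℝ)) ^ 2 := by
        gcongr
    _ = (∫⁻ a, k a ∂μ) * ∫⁻ a, k a * g a ^ 2 ∂μ := by rw [mul_pow, hhalf, hhalf]

variable {μ : Measure α} {ν : Measure β} [SFinite μ] [SFinite ν]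

theorem eLpNorm_two_integral_kernel_le {K : α → β → ℝ} (hK : Measurable (Function.uncurry K))
    (hK0 : ∀ a b, 0 ≤ K a b) {C : ℝ≥0∞}
    (hrow : ∀ a, ∫⁻ b, ENNReal.ofReal (K a b) ∂ν ≤ C)
    (hcol : ∀ b, ∫⁻ a, ENNReal.ofReal (K a b) ∂μ ≤ C)
    {f : β → ℝ} (hf : AEStronglyMeasurable f ν) :
    eLpNorm (fun a => ∫ b, K a b * f b ∂ν) 2 μ ≤ C * eLpNorm f 2 ν := by
  set k : α → β → ℝ≥0∞ := fun a b => ENNReal.ofReal (K a b)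
  have hk : Measurable (Function.uncurry k) := ENNReal.measurable_ofReal.comp hK
  have hf2 : AEMeasurable (fun b => ‖f b‖ₑ ^ 2) ν := hf.enorm.pow_const 2
  have hpoint : ∀ a, ‖∫ b, K a b * f b ∂ν‖ₑ ^ 2 ≤ C * ∫⁻ b, k a b * ‖f b‖ₑ ^ 2 ∂ν := by
    intro a
    have h1 : ‖∫ b, K a b * f b ∂ν‖ₑ ≤ ∫⁻ b, k a b * ‖f b‖ₑ ∂ν :=
      (enorm_integral_le_lintegral_enorm _).trans_eq (lintegral_congr fun b => by
        rw [enorm_mul, Real.enorm_eq_ofReal (hK0 a b)])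
    calc ‖∫ b, K a b * f b ∂ν‖ₑ ^ 2 ≤ (∫⁻ b, k a b * ‖f b‖ₑ ∂ν) ^ 2 := by gcongr
      _ ≤ (∫⁻ b, k a b ∂ν) * ∫⁻ b, k a b * ‖f b‖ₑ ^ 2 ∂ν :=
        lintegral_mul_sq_le (hk.comp measurable_prodMk_left).aemeasurable hf.enorm
      _ ≤ C * ∫⁻ b, k a b * ‖f b‖ₑ ^ 2 ∂ν := by gcongr; exact hrow a
  have hjoint : AEMeasurable (Function.uncurry fun a b => k a b * ‖f b‖ₑ ^ 2) (μ.prod ν) :=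
    hk.aemeasurable.mul hf2.comp_snd
  have hinner : AEMeasurable (fun a => ∫⁻ b, k a b * ‖f b‖ₑ ^ 2 ∂ν) μ :=
    hjoint.lintegral_prod_right'
  have hsq : ∫⁻ a, ‖∫ b, K a b * f b ∂ν‖ₑ ^ 2 ∂μ ≤ C ^ 2 * ∫⁻ b, ‖f b‖ₑ ^ 2 ∂ν :=
    calc ∫⁻ a, ‖∫ b, K a b * f b ∂ν‖ₑ ^ 2 ∂μ
        ≤ ∫⁻ a, C * ∫⁻ b, k a b * ‖f b‖ₑ ^ 2 ∂ν ∂μ := lintegral_mono hpoint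
      _ = C * ∫⁻ b, (∫⁻ a, k a b ∂μ) * ‖f b‖ₑ ^ 2 ∂ν := by
        rw [lintegral_const_mul'' _ hinner, lintegral_lintegral_swap hjoint]
        exact congrArg (C * ·) (lintegral_congr fun b =>
          lintegral_mul_const _ (hk.comp measurable_prodMk_right))
      _ ≤ C * ∫⁻ b, C * ‖f b‖ₑ ^ 2 ∂ν := by gcongr with b; exact hcol b
      _ = C ^ 2 * ∫⁻ b, ‖f b‖ₑ ^ 2 ∂ν := by rw [lintegral_const_mul'' _ hf2, ← mul_assoc, sq]
  rw [← ENNReal.pow_le_pow_left_iff two_ne_zero, mul_pow, eLpNorm_two_sq, eLpNorm_two_sq]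
  exact hsq

end Schur

section Gaussian

open Real

theorem lintegral_exp_neg_sq_sub_div (c : ℝ) {t : ℝ} (ht : 0 < t) :
    ∫⁻ u : ℝ, ENNReal.ofReal (exp (-((c - u) ^ 2 / (4 * t)))) =
      ENNReal.ofReal √(4 * π * t) := by
  have hb : 0 < (4 * t)⁻¹ := by positivity
  calc ∫⁻ u : ℝ, ENNReal.ofReal (exp (-((c - u) ^ 2 / (4 * t))))
      = ∫⁻ u : ℝ, ENNReal.ofReal (exp (-(4 * t)⁻¹ * u ^ 2)) := by
        rw [← lintegral_sub_left_eq_self _ c]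
        congr! 4 with u
        ring
    _ = ENNReal.ofReal (∫ u : ℝ, exp (-(4 * t)⁻¹ * u ^ 2)) :=
        (ofReal_integral_eq_lintegral_ofReal (integrable_exp_neg_mul_sq hb)
          (ae_of_all _ fun _ => (exp_pos _).le)).symm
    _ = ENNReal.ofReal √(4 * π * t) := by
        rw [integral_gaussian, div_inv_eq_mul]
        ring_nf

theorem lintegral_exp_neg_sq_add_sq_div_le (a b : ℝ) {t : ℝ} (ht : 0 < t) :
    ∫⁻ u : ℝ, ENNReal.ofReal (exp (-(((a - u) ^ 2 + (b - u) ^ 2) / (4 * t)))) ≤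
      ENNReal.ofReal √(2 * π * t) := by
  have hdom : ∀ u : ℝ, exp (-(((a - u) ^ 2 + (b - u) ^ 2) / (4 * t))) ≤
      exp (-(((a + b) / 2 - u) ^ 2 / (4 * (t / 2)))) := fun u => by
    have hsplit : ((a - u) ^ 2 + (b - u) ^ 2) / (4 * t) =
        ((a + b) / 2 - u) ^ 2 / (4 * (t / 2)) + (a - b) ^ 2 / (8 * t) := by
      field_simp; ring
    rw [exp_le_exp, neg_le_neg_iff, hsplit]
    exact le_add_of_nonneg_right (by positivity)
  calc ∫⁻ u : ℝ, ENNReal.ofReal (exp (-(((a - u) ^ 2 + (b - u) ^ 2) / (4 * t))))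
      ≤ ∫⁻ u : ℝ, ENNReal.ofReal (exp (-(((a + b) / 2 - u) ^ 2 / (4 * (t / 2))))) :=
        lintegral_mono fun u => ENNReal.ofReal_le_ofReal (hdom u)
    _ = ENNReal.ofReal √(2 * π * t) := by
        rw [lintegral_exp_neg_sq_sub_div _ (half_pos ht)]
        ring_nf

theorem lintegral_exp_neg_mul_div_sqrt {c : ℝ} (hc : 0 < c) :
    ∫⁻ t in Set.Ioi (0 : ℝ), ENNReal.ofReal (exp (-(c * t)) / √t) =
      ENNReal.ofReal √(π / c) := by
  have hint : IntegrableOn (fun t : ℝ => t ^ ((1 : ℝ) / 2 - 1) * exp (-(c * t))) (Set.Ioi 0) := by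
    simpa [rpow_one, neg_mul] using integrableOn_rpow_mul_exp_neg_mul_rpow
      (p := 1) (s := (1 : ℝ) / 2 - 1) (b := c) (by norm_num) zero_lt_one hc
  have hrpow : ∀ t ∈ Set.Ioi (0 : ℝ), ENNReal.ofReal (exp (-(c * t)) / √t) =
      ENNReal.ofReal (t ^ ((1 : ℝ) / 2 - 1) * exp (-(c * t))) := fun t ht => by
    rw [show (1 : ℝ) / 2 - 1 = -(1 / 2) by norm_num, rpow_neg (le_of_lt ht), ← sqrt_eq_rpow,
      div_eq_inv_mul]
  rw [setLIntegral_congr_fun measurableSet_Ioi hrpow, ← ofReal_integral_eq_lintegral_ofReal hint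
    ((ae_restrict_mem measurableSet_Ioi).mono fun t (ht : 0 < t) => by positivity),
    integral_rpow_mul_exp_neg_mul_Ioi (by norm_num) hc, Gamma_one_half_eq, ← sqrt_eq_rpow,
    ← sqrt_mul (by positivity), one_div_mul_eq_div]

end Gaussian

theorem lintegral_prod_prod_mul {α β γ : Type*} [MeasurableSpace α] [MeasurableSpace β]
    [MeasurableSpace γ] {μ : Measure α} {ν : Measure β} {ρ : Measure γ} [SFinite ν] [SFinite ρ]
    {f : α → ℝ≥0∞} {g : β → ℝ≥0∞} {h : γ → ℝ≥0∞} (hf : AEMeasurable f μ)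
    (hg : AEMeasurable g ν) (hh : AEMeasurable h ρ) :
    ∫⁻ p, f p.1 * (g p.2.1 * h p.2.2) ∂μ.prod (ν.prod ρ) =
      (∫⁻ a, f a ∂μ) * ((∫⁻ b, g b ∂ν) * ∫⁻ c, h c ∂ρ) := by
  rw [lintegral_prod_mul (g := fun q : β × γ => g q.1 * h q.2) hf (hg.comp_fst.mul hh.comp_snd),
    lintegral_prod_mul hg hh]

section Green

open Real

/-- `G_z^{(4)}(X) = green4 z ‖X‖²`. -/
noncomputable def green4 (z r : ℝ) : ℝ :=
  ∫ t in Set.Ioi (0 : ℝ), (4 * π * t) ^ (-(2 : ℝ)) * exp (-(r / (4 * t)) + z * t)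

theorem K4_eq_green4 (z x y w x' y' w' : ℝ) :
    K4 z x y w x' y' w' = green4 z ((x - x') ^ 2 + (y - x') ^ 2 + (w - y') ^ 2 + (w - w') ^ 2) :=
  rfl

theorem green4_nonneg (z r : ℝ) : 0 ≤ green4 z r :=
  setIntegral_nonneg measurableSet_Ioi fun t (ht : 0 < t) => by positivity

theorem measurable_green4 (z : ℝ) : Measurable (green4 z) := by
  have hF : StronglyMeasurable fun q : ℝ × ℝ =>
      (4 * π * q.2) ^ (-(2 : ℝ)) * exp (-(q.1 / (4 * q.2)) + z * q.2) :=
    Measurable.stronglyMeasurable (by fun_prop)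
  exact hF.integral_prod_right'.measurable

theorem rpow_neg_two_mul_exp_mul_sqrt_eq {z t : ℝ} (ht : 0 < t) :
    (4 * π * t) ^ (-(2 : ℝ)) * exp (z * t) * (4 * π * t * √(2 * π * t)) =
      √(2 * π) / (4 * π) * (exp (-(-z * t)) / √t) := by
  rw [rpow_neg (by positivity), rpow_two, sqrt_mul (by positivity), neg_mul, neg_neg]
  field_simp
  exact sq_sqrt ht.le

theorem sqrt_two_pi_div_mul_sqrt_pi_div {z : ℝ} (hz : z < 0) :
    √(2 * π) / (4 * π) * √(π / -z) = 1 / (2 * √(2 * |z|)) := by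
  have hz' : 0 < -z := neg_pos.2 hz
  have hsq : 2 * π * (π / -z) = π ^ 2 * (2 / -z) := by ring
  rw [abs_of_neg hz, div_mul_eq_mul_div, ← sqrt_mul (by positivity), hsq,
    sqrt_mul (by positivity), sqrt_sq pi_pos.le, sqrt_div' _ hz'.le, sqrt_mul' _ hz'.le]
  field_simp
  norm_num

theorem lintegral_ofReal_green4_le {α : Type*} [MeasurableSpace α] {μ : Measure α} [SFinite μ]
    {z : ℝ} (hz : z < 0) {Q : α → ℝ} (hQ : Measurable Q)
    (hgauss : ∀ t, 0 < t → ∫⁻ p, ENNReal.ofReal (exp (-(Q p / (4 * t)))) ∂μ ≤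
      ENNReal.ofReal (4 * π * t * √(2 * π * t))) :
    ∫⁻ p, ENNReal.ofReal (green4 z (Q p)) ∂μ ≤ ENNReal.ofReal (1 / (2 * √(2 * |z|))) := by
  set F : α → ℝ → ℝ := fun p t => (4 * π * t) ^ (-(2 : ℝ)) * exp (-(Q p / (4 * t)) + z * t)
  have hslice : ∀ t ∈ Set.Ioi (0 : ℝ), ∫⁻ p, ENNReal.ofReal (F p t) ∂μ ≤
      ENNReal.ofReal (√(2 * π) / (4 * π)) * ENNReal.ofReal (exp (-(-z * t)) / √t) := by
    intro t (ht : 0 < t)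
    have hA : 0 ≤ (4 * π * t) ^ (-(2 : ℝ)) * exp (z * t) := by positivity
    calc ∫⁻ p, ENNReal.ofReal (F p t) ∂μ
        = ∫⁻ p, ENNReal.ofReal ((4 * π * t) ^ (-(2 : ℝ)) * exp (z * t)) *
            ENNReal.ofReal (exp (-(Q p / (4 * t)))) ∂μ := lintegral_congr fun p => by
          rw [← ENNReal.ofReal_mul hA, mul_assoc, ← exp_add, add_comm (z * t)]
      _ = ENNReal.ofReal ((4 * π * t) ^ (-(2 : ℝ)) * exp (z * t)) *
            ∫⁻ p, ENNReal.ofReal (exp (-(Q p / (4 * t)))) ∂μ :=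
          lintegral_const_mul' _ _ ENNReal.ofReal_ne_top
      _ ≤ ENNReal.ofReal ((4 * π * t) ^ (-(2 : ℝ)) * exp (z * t)) *
            ENNReal.ofReal (4 * π * t * √(2 * π * t)) := by gcongr; exact hgauss t ht
      _ = ENNReal.ofReal (√(2 * π) / (4 * π)) * ENNReal.ofReal (exp (-(-z * t)) / √t) := by
          rw [← ENNReal.ofReal_mul hA, rpow_neg_two_mul_exp_mul_sqrt_eq ht,
            ENNReal.ofReal_mul (by positivity)]
  have hF : Measurable (Function.uncurry fun p t => ENNReal.ofReal (F p t)) := by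
    unfold F; fun_prop
  calc ∫⁻ p, ENNReal.ofReal (green4 z (Q p)) ∂μ
      ≤ ∫⁻ p, (∫⁻ t in Set.Ioi 0, ENNReal.ofReal (F p t)) ∂μ :=
        lintegral_mono fun p => ofReal_integral_le_lintegral_ofReal <|
          (ae_restrict_mem measurableSet_Ioi).mono fun t (ht : 0 < t) => by positivity
    _ = ∫⁻ t in Set.Ioi 0, ∫⁻ p, ENNReal.ofReal (F p t) ∂μ :=
        lintegral_lintegral_swap hF.aemeasurable
    _ ≤ ∫⁻ t in Set.Ioi 0, ENNReal.ofReal (√(2 * π) / (4 * π)) *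
          ENNReal.ofReal (exp (-(-z * t)) / √t) :=
        setLIntegral_mono' measurableSet_Ioi hslice
    _ = ENNReal.ofReal (1 / (2 * √(2 * |z|))) := by
        rw [lintegral_const_mul' _ _ ENNReal.ofReal_ne_top,
          lintegral_exp_neg_mul_div_sqrt (neg_pos.2 hz), ← ENNReal.ofReal_mul (by positivity),
          sqrt_two_pi_div_mul_sqrt_pi_div hz]

end Green

section Kernel

open Real

theorem lintegral_ofReal_exp_neg_add_add_div {f₁ f₂ f₃ : ℝ → ℝ} (h₁ : Measurable f₁)
    (h₂ : Measurable f₂) (h₃ : Measurable f₃) (s : ℝ) :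
    ∫⁻ p : ℝ × ℝ × ℝ, ENNReal.ofReal (exp (-((f₁ p.1 + f₂ p.2.1 + f₃ p.2.2) / s))) =
      (∫⁻ u, ENNReal.ofReal (exp (-(f₁ u / s)))) *
        ((∫⁻ u, ENNReal.ofReal (exp (-(f₂ u / s)))) *
          ∫⁻ u, ENNReal.ofReal (exp (-(f₃ u / s)))) := by
  set E : (ℝ → ℝ) → ℝ → ℝ≥0∞ := fun f u => ENNReal.ofReal (exp (-(f u / s))) with hE_def
  have hE : ∀ f : ℝ → ℝ, Measurable f → AEMeasurable (E f) := fun f hf => by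
    rw [hE_def]; fun_prop
  have hsplit : ∀ p : ℝ × ℝ × ℝ, ENNReal.ofReal (exp (-((f₁ p.1 + f₂ p.2.1 + f₃ p.2.2) / s))) =
      E f₁ p.1 * (E f₂ p.2.1 * E f₃ p.2.2) := fun p => by
    rw [hE_def, ← ENNReal.ofReal_mul (exp_pos _).le, ← ENNReal.ofReal_mul (exp_pos _).le,
      ← exp_add, ← exp_add]
    ring_nf
  rw [lintegral_congr hsplit]
  exact lintegral_prod_prod_mul (hE f₁ h₁) (hE f₂ h₂) (hE f₃ h₃)

theorem ofReal_sqrt_mul_ofReal_sqrt {a : ℝ} (ha : 0 ≤ a) :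
    ENNReal.ofReal √a * ENNReal.ofReal √a = ENNReal.ofReal a := by
  rw [← ENNReal.ofReal_mul (sqrt_nonneg a), mul_self_sqrt ha]

theorem K4_nonneg (z x y w x' y' w' : ℝ) : 0 ≤ K4 z x y w x' y' w' := by
  rw [K4_eq_green4]
  exact green4_nonneg _ _

theorem measurable_K4 (z : ℝ) :
    Measurable fun v : (ℝ × ℝ × ℝ) × (ℝ × ℝ × ℝ) =>
      K4 z v.1.1 v.1.2.1 v.1.2.2 v.2.1 v.2.2.1 v.2.2.2 := by
  simp only [K4_eq_green4]
  exact (measurable_green4 z).comp (by fun_prop)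

theorem lintegral_ofReal_K4_right_le {z : ℝ} (hz : z < 0) (x y w : ℝ) :
    ∫⁻ p : ℝ × ℝ × ℝ, ENNReal.ofReal (K4 z x y w p.1 p.2.1 p.2.2) ≤
      ENNReal.ofReal (1 / (2 * √(2 * |z|))) := by
  simp only [K4_eq_green4]
  refine lintegral_ofReal_green4_le hz (by fun_prop) fun t ht => ?_
  calc _ = (∫⁻ u, ENNReal.ofReal (exp (-(((x - u) ^ 2 + (y - u) ^ 2) / (4 * t))))) *
        ((∫⁻ u, ENNReal.ofReal (exp (-((w - u) ^ 2 / (4 * t))))) *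
          ∫⁻ u, ENNReal.ofReal (exp (-((w - u) ^ 2 / (4 * t))))) :=
        lintegral_ofReal_exp_neg_add_add_div (f₁ := fun u => (x - u) ^ 2 + (y - u) ^ 2)
          (f₂ := fun u => (w - u) ^ 2) (f₃ := fun u => (w - u) ^ 2) (by fun_prop) (by fun_prop)
          (by fun_prop) _
    _ ≤ ENNReal.ofReal √(2 * π * t) *
          (ENNReal.ofReal √(4 * π * t) * ENNReal.ofReal √(4 * π * t)) := by
        rw [lintegral_exp_neg_sq_sub_div _ ht]
        gcongr
        exact lintegral_exp_neg_sq_add_sq_div_le x y ht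
    _ = ENNReal.ofReal (4 * π * t * √(2 * π * t)) := by
        rw [ofReal_sqrt_mul_ofReal_sqrt (by positivity), ← ENNReal.ofReal_mul (sqrt_nonneg _),
          mul_comm]

theorem lintegral_ofReal_K4_left_le {z : ℝ} (hz : z < 0) (x' y' w' : ℝ) :
    ∫⁻ q : ℝ × ℝ × ℝ, ENNReal.ofReal (K4 z q.1 q.2.1 q.2.2 x' y' w') ≤
      ENNReal.ofReal (1 / (2 * √(2 * |z|))) := by
  simp only [K4_eq_green4]
  refine lintegral_ofReal_green4_le hz (by fun_prop) fun t ht => ?_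
  calc _ = ∫⁻ q : ℝ × ℝ × ℝ, ENNReal.ofReal (exp (-(((x' - q.1) ^ 2 + (x' - q.2.1) ^ 2 +
          ((y' - q.2.2) ^ 2 + (w' - q.2.2) ^ 2)) / (4 * t)))) := by
        congr 1; funext q; ring_nf
    _ = (∫⁻ u, ENNReal.ofReal (exp (-((x' - u) ^ 2 / (4 * t))))) *
        ((∫⁻ u, ENNReal.ofReal (exp (-((x' - u) ^ 2 / (4 * t))))) *
          ∫⁻ u, ENNReal.ofReal (exp (-(((y' - u) ^ 2 + (w' - u) ^ 2) / (4 * t))))) :=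
        lintegral_ofReal_exp_neg_add_add_div (f₁ := fun u => (x' - u) ^ 2)
          (f₂ := fun u => (x' - u) ^ 2) (f₃ := fun u => (y' - u) ^ 2 + (w' - u) ^ 2)
          (by fun_prop) (by fun_prop) (by fun_prop) _
    _ ≤ ENNReal.ofReal √(4 * π * t) *
          (ENNReal.ofReal √(4 * π * t) * ENNReal.ofReal √(2 * π * t)) := by
        rw [lintegral_exp_neg_sq_sub_div _ ht]
        gcongr
        exact lintegral_exp_neg_sq_add_sq_div_le y' w' ht
    _ = ENNReal.ofReal (4 * π * t * √(2 * π * t)) := by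
        rw [← mul_assoc, ofReal_sqrt_mul_ofReal_sqrt (by positivity),
          ← ENNReal.ofReal_mul (by positivity)]

end Kernel

/-- Schur bound for the 4-dimensional Green function kernel: for `z < 0`,
`sup ∫ K dx'dy'dw' ≤ 1/(2√(2|z|))`, hence the induced integral operator
`B : L²(ℝ³) → L²(ℝ³)` is bounded with `‖B‖ ≤ (2√(2|z|))⁻¹`. -/
theorem stmt_14 (z : ℝ) (hz : z < 0) :
    (∀ x y w : ℝ, (∫ p : ℝ × ℝ × ℝ, K4 z x y w p.1 p.2.1 p.2.2) ≤
      1 / (2 * Real.sqrt (2 * |z|))) ∧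
    ∀ f : ℝ × ℝ × ℝ → ℝ, AEStronglyMeasurable f (volume : Measure (ℝ × ℝ × ℝ)) →
      eLpNorm (fun q : ℝ × ℝ × ℝ => ∫ p : ℝ × ℝ × ℝ, K4 z q.1 q.2.1 q.2.2 p.1 p.2.1 p.2.2 * f p)
          2 (volume : Measure (ℝ × ℝ × ℝ)) ≤
        ENNReal.ofReal (1 / (2 * Real.sqrt (2 * |z|))) *
          eLpNorm f 2 (volume : Measure (ℝ × ℝ × ℝ)) := by
  refine ⟨fun x y w => integral_le_of_lintegral_ofReal_le (fun _ => K4_nonneg ..)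
    (by positivity) (lintegral_ofReal_K4_right_le hz x y w), fun f hf => ?_⟩
  exact eLpNorm_two_integral_kernel_le
    (K := fun q p : ℝ × ℝ × ℝ => K4 z q.1 q.2.1 q.2.2 p.1 p.2.1 p.2.2)
    (measurable_K4 z) (fun _ _ => K4_nonneg ..)
    (fun q => lintegral_ofReal_K4_right_le hz q.1 q.2.1 q.2.2)
    (fun p => lintegral_ofReal_K4_left_le hz p.1 p.2.1 p.2.2) hf
end
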